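/- Duality-pairing estimate for differences of the critical nonlinearity: Let T > 0, α ∈ [0,1/2], β̂ ∈ (1/2,1] and ρ̂ > 0 satisfy (1+ρ̂)(2β̂−1) ≤ 1+2α. Let F̂ : [0,T]×V → V_α be such that for all n > 0 there is a constant C_{n,T}, non-decreasing in n and T, with ‖F̂(t,u) − F̂(t,v)‖_α ≤ C_{n,T}(1 + ‖u‖_{β̂}^{ρ̂} + ‖v‖_{β̂}^{ρ̂})‖u−v‖_{β̂} for all t ∈ [0,T] and u,v ∈ V with ‖u‖_H, ‖v‖_H ≤ n. Then for every σ > 0 and n > 0 there exists a constant Ĉ_{σ,n,T} such that for all u, v ∈ MR(0,T) with ‖u‖_{C([0,T];H)}, ‖v‖_{C([0,T];H)} ≤ n: |∫₀^T ⟨F̂(t,u(t)) − F̂(t,v(t)), u(t) − v(t)⟩ dt| ≤ Ĉ_{σ,n,T} ∫₀^T (1 + ‖u(t)‖²_V + ‖v(t)‖²_V)‖u(t) − v(t)‖²_H dt + σ‖u − v‖²_{L²(0,T;V)}. -/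

import Mathlib

open MeasureTheory Set

noncomputable section

lemma young_scaled {γ δ σ t s : ℝ} (hγ : 0 < γ) (hδ : 0 < δ)
    (hsum : γ + δ = 2) (hσ : 0 < σ) (ht : 0 ≤ t) (hs : 0 ≤ s) :
    t ^ γ * s ^ δ ≤ σ ^ (-δ/γ) * t ^ 2 + σ * s ^ 2 := by
  have hγne : γ ≠ 0 := ne_of_gt hγ
  have hex1 : (-δ/γ)*(γ/2) = -δ/2 := by field_simp
  have hex2 : ((2:ℕ):ℝ)*(γ/2) = γ := by push_cast; ring
  have hex3 : ((2:ℕ):ℝ)*(δ/2) = δ := by push_cast; ring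
  have h1 : (0:ℝ) ≤ σ ^ (-δ/γ) * t^2 := by positivity
  have h2 : (0:ℝ) ≤ σ * s^2 := by positivity
  have G := Real.geom_mean_le_arith_mean2_weighted
    (by linarith : (0:ℝ) ≤ γ/2) (by linarith : (0:ℝ) ≤ δ/2) h1 h2 (by linarith)
  have e1 : (σ ^ (-δ/γ) * t^2) ^ (γ/2) = σ ^ (-δ/2) * t ^ γ := by
    rw [Real.mul_rpow (Real.rpow_nonneg hσ.le _) (by positivity),
        ← Real.rpow_natCast t 2, ← Real.rpow_mul ht, ← Real.rpow_mul hσ.le, hex1, hex2]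
  have e2 : (σ * s^2) ^ (δ/2) = σ ^ (δ/2) * s ^ δ := by
    rw [Real.mul_rpow hσ.le (by positivity), ← Real.rpow_natCast s 2,
        ← Real.rpow_mul hs, hex3]
  rw [e1, e2] at G
  have e4 : σ ^ (-δ/2) * σ ^ (δ/2) = 1 := by
    rw [← Real.rpow_add hσ]; simp [neg_div]
  have e3 : σ ^ (-δ/2) * t ^ γ * (σ ^ (δ/2) * s ^ δ) = t ^ γ * s ^ δ := by
    calc σ ^ (-δ/2) * t ^ γ * (σ ^ (δ/2) * s ^ δ)
        = (σ ^ (-δ/2) * σ ^ (δ/2)) * (t ^ γ * s ^ δ) := by ring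
      _ = t ^ γ * s ^ δ := by rw [e4, one_mul]
  rw [e3] at G
  nlinarith [mul_nonneg (by linarith : (0:ℝ) ≤ 1 - γ/2) h1,
    mul_nonneg (by linarith : (0:ℝ) ≤ 1 - δ/2) h2]

lemma young_P {γ δ σ P a b : ℝ} (hγ : 0 < γ) (hδ : 0 < δ) (hsum : γ + δ = 2)
    (hσ : 0 < σ) (hP : 0 ≤ P) (ha : 0 ≤ a) (hb : 0 ≤ b) :
    P * (a ^ γ * b ^ δ) ≤ σ ^ (-δ/γ) * (P ^ (2/γ) * a ^ 2) + σ * b ^ 2 := by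
  have hγne : γ ≠ 0 := ne_of_gt hγ
  have key := young_scaled hγ hδ hsum hσ (t := P^(1/γ) * a) (by positivity) hb
  have e1 : (P^(1/γ) * a)^γ = P * a^γ := by
    rw [Real.mul_rpow (Real.rpow_nonneg hP _) ha, ← Real.rpow_mul hP,
      show 1/γ*γ = 1 from by field_simp, Real.rpow_one]
  have e2 : (P^(1/γ) * a)^2 = P^(2/γ) * a^2 := by
    rw [mul_pow, ← Real.rpow_natCast (P^(1/γ)) 2, ← Real.rpow_mul hP,
      show 1/γ*((2:ℕ):ℝ) = 2/γ from by push_cast; ring]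
  rw [e1, e2] at key
  calc P * (a ^ γ * b ^ δ) = P * a ^ γ * b ^ δ := by ring
    _ ≤ σ ^ (-δ/γ) * (P ^ (2/γ) * a ^ 2) + σ * b ^ 2 := by linarith [key]

lemma pointwise_est {α βh μ σ K₂ A B a b NNα : ℝ}
    (hα0 : 0 ≤ α) (hα2 : α ≤ 1/2) (hb1 : 1/2 < βh) (hb2 : βh ≤ 1)
    (hγpos : 0 < 2*α + 2 - 2*βh) (hμ0 : 0 ≤ μ) (hμγ : μ ≤ 2*α + 2 - 2*βh)
    (hσ : 0 < σ) (hK : 0 < K₂) (hA : 0 ≤ A) (hB : 0 ≤ B) (ha : 0 ≤ a) (hb : 0 ≤ b)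
    (hNa0 : 0 ≤ NNα)
    (hNa : NNα ≤ K₂ * (1 + A^μ + B^μ) * (a^(2-2*βh) * b^(2*βh-1))) :
    NNα * a^(2*α) * b^(1-2*α) ≤
      (σ ^ (-(2*βh-2*α)/(2*α+2-2*βh)) * (3*K₂) ^ (2/(2*α+2-2*βh))) * ((1+A^2+B^2) * a^2)
        + σ * b^2 := by
  set γ := 2*α + 2 - 2*βh with hγdef
  set δ := 2*βh - 2*α with hδdef
  have hδpos : 0 < δ := by simp only [hδdef]; linarith
  have hsum : γ + δ = 2 := by simp only [hγdef, hδdef]; ring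
  set R := 1 + A^2 + B^2 with hRdef
  have hR1 : (1:ℝ) ≤ R := by simp only [hRdef]; nlinarith [sq_nonneg A, sq_nonneg B]
  have hR0 : (0:ℝ) ≤ R := by linarith
  have hRγ1 : (1:ℝ) ≤ R ^ (γ/2) := by
    calc (1:ℝ) = R ^ (0:ℝ) := (Real.rpow_zero R).symm
      _ ≤ R ^ (γ/2) := Real.rpow_le_rpow_of_exponent_le hR1 (by linarith)
  have hpow : ∀ X : ℝ, 0 ≤ X → X^2 ≤ R → X ^ μ ≤ R ^ (γ/2) := by
    intro X hX hXR
    calc X ^ μ = (X^2) ^ (μ/2) := by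
          rw [← Real.rpow_natCast X 2, ← Real.rpow_mul hX]
          congr 1; push_cast; ring
      _ ≤ R ^ (μ/2) := Real.rpow_le_rpow (by positivity) hXR (by linarith)
      _ ≤ R ^ (γ/2) := Real.rpow_le_rpow_of_exponent_le hR1 (by linarith)
  have hS : 1 + A^μ + B^μ ≤ 3 * R ^ (γ/2) := by
    have h1 := hpow A hA (by simp only [hRdef]; nlinarith [sq_nonneg B])
    have h2 := hpow B hB (by simp only [hRdef]; nlinarith [sq_nonneg A])
    linarith
  have ea : a^(2-2*βh) * a^(2*α) = a^γ := by
    rw [← Real.rpow_add' ha (by simp only [hγdef] at hγpos ⊢; intro h; linarith)]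
    congr 1; simp only [hγdef]; ring
  have eb : b^(2*βh-1) * b^(1-2*α) = b^δ := by
    rw [← Real.rpow_add' hb (by intro h; simp only [hδdef] at hδpos; linarith)]
    congr 1; simp only [hδdef]; ring
  have hab : 0 ≤ a^γ * b^δ := by positivity
  have step1 : NNα * a^(2*α) * b^(1-2*α) ≤ K₂ * (1 + A^μ + B^μ) * (a^γ * b^δ) := by
    calc NNα * a^(2*α) * b^(1-2*α)
        ≤ (K₂ * (1 + A^μ + B^μ) * (a^(2-2*βh) * b^(2*βh-1))) * a^(2*α) * b^(1-2*α) := by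
          apply mul_le_mul_of_nonneg_right _ (by positivity)
          exact mul_le_mul_of_nonneg_right hNa (by positivity)
      _ = K₂ * (1 + A^μ + B^μ) * ((a^(2-2*βh) * a^(2*α)) * (b^(2*βh-1) * b^(1-2*α))) := by
          ring
      _ = K₂ * (1 + A^μ + B^μ) * (a^γ * b^δ) := by rw [ea, eb]
  have step2 : K₂ * (1 + A^μ + B^μ) * (a^γ * b^δ) ≤ (3 * K₂ * R^(γ/2)) * (a^γ * b^δ) := by
    apply mul_le_mul_of_nonneg_right _ hab
    calc K₂ * (1 + A^μ + B^μ) ≤ K₂ * (3 * R^(γ/2)) :=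
          mul_le_mul_of_nonneg_left hS hK.le
      _ = 3 * K₂ * R^(γ/2) := by ring
  have step3 := young_P (σ := σ) (P := 3 * K₂ * R^(γ/2)) (a := a) (b := b)
    hγpos hδpos hsum hσ (by positivity) ha hb
  have ePR : (3 * K₂ * R^(γ/2)) ^ (2/γ) = (3*K₂) ^ (2/γ) * R := by
    rw [Real.mul_rpow (by positivity) (Real.rpow_nonneg hR0 _), ← Real.rpow_mul hR0,
      show γ/2*(2/γ) = 1 from by field_simp, Real.rpow_one]
  rw [ePR] at step3
  calc NNα * a^(2*α) * b^(1-2*α) ≤ (3 * K₂ * R^(γ/2)) * (a^γ * b^δ) := step1.trans step2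
    _ ≤ σ ^ (-δ/γ) * ((3*K₂) ^ (2/γ) * R * a ^ 2) + σ * b ^ 2 := step3
    _ = (σ ^ (-δ/γ) * (3*K₂) ^ (2/γ)) * (R * a^2) + σ * b^2 := by ring

/-- **Duality-pairing estimate for differences of the critical
nonlinearity.** Let `T > 0`, `α ∈ [0,1/2]`, `β̂ ∈ (1/2,1]`, `ρ̂ > 0` with
`(1+ρ̂)(2β̂−1) ≤ 1+2α`. In the Gelfand triple `(V, H, V*)` (`Vs` models `V*`, `pair` the
duality pairing, `N θ` the interpolation norms, with properties (P1) for `β̂` and (P2)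
for `α`), suppose `F̂ : [0,T]×V → V_α` satisfies the local Lipschitz bound
`‖F̂(t,u)−F̂(t,v)‖_α ≤ C_n(1 + ‖u‖_β̂^ρ̂ + ‖v‖_β̂^ρ̂)‖u−v‖_β̂` for `‖u‖_H,‖v‖_H ≤ n`.
Then for every `σ > 0` and `n > 0` there is a constant `Ĉ_{σ,n,T}` such that for all
`u, v ∈ MR(0,T)` bounded by `n` in `C([0,T];H)`:
`|∫₀ᵀ ⟨F̂(t,u)−F̂(t,v), u−v⟩ dt| ≤
  Ĉ ∫₀ᵀ (1+‖u‖²_V+‖v‖²_V)‖u−v‖²_H dt + σ‖u−v‖²_{L²(0,T;V)}`. -/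
theorem critical_nonlinearity_duality_estimate
    {V H Vs : Type*}
    [NormedAddCommGroup V] [NormedSpace ℝ V] [MeasurableSpace V] [BorelSpace V]
    [NormedAddCommGroup H] [NormedSpace ℝ H]
    [NormedAddCommGroup Vs] [NormedSpace ℝ Vs]
    (ιVH : V →L[ℝ] H) (ιV : V →L[ℝ] Vs)
    (pair : Vs →L[ℝ] V →L[ℝ] ℝ)
    (N : ℝ → Vs → ℝ) (hN_nonneg : ∀ θ y, 0 ≤ N θ y)
    (T : ℝ) (hT : 0 < T)
    (α : ℝ) (hα : α ∈ Icc (0:ℝ) (1/2))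
    (βh : ℝ) (hβh : βh ∈ Ioc ((1:ℝ)/2) 1)
    (ρh : ℝ) (hρh : 0 < ρh)
    (hsubcrit : (1 + ρh) * (2 * βh - 1) ≤ 1 + 2 * α)
    (hP1 : ∀ v : V, N βh (ιV v) ≤ ‖ιVH v‖ ^ (2 - 2*βh) * ‖v‖ ^ (2*βh - 1))
    (hP2 : ∀ (y : Vs) (x : V),
      pair y x ≤ N α y * ‖ιVH x‖ ^ (2*α) * ‖x‖ ^ (1 - 2*α))
    (Fhat : ℝ → V → Vs)
    (hFmeas : StronglyMeasurable (Function.uncurry Fhat))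
    (C : ℝ → ℝ) (hC_mono : Monotone C)
    (hlip : ∀ n > (0:ℝ), ∀ t ∈ Icc (0:ℝ) T, ∀ u v : V, ‖ιVH u‖ ≤ n → ‖ιVH v‖ ≤ n →
      N α (Fhat t u - Fhat t v) ≤
        C n * (1 + N βh (ιV u) ^ ρh + N βh (ιV v) ^ ρh) * N βh (ιV (u - v))) :
    ∀ σ > (0:ℝ), ∀ n > (0:ℝ), ∃ Chat : ℝ, 0 < Chat ∧
      ∀ u v : ℝ → V,
        (ContinuousOn (fun t => ιVH (u t)) (Icc 0 T) ∧
          MemLp u 2 (volume.restrict (Ioc 0 T))) →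
        (ContinuousOn (fun t => ιVH (v t)) (Icc 0 T) ∧
          MemLp v 2 (volume.restrict (Ioc 0 T))) →
        (∀ t ∈ Icc (0:ℝ) T, ‖ιVH (u t)‖ ≤ n) →
        (∀ t ∈ Icc (0:ℝ) T, ‖ιVH (v t)‖ ≤ n) →
        |∫ t in Ioc (0:ℝ) T, pair (Fhat t (u t) - Fhat t (v t)) (u t - v t)|
          ≤ Chat * (∫ t in Ioc (0:ℝ) T,
                (1 + ‖u t‖ ^ 2 + ‖v t‖ ^ 2) * ‖ιVH (u t) - ιVH (v t)‖ ^ 2) +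
            σ * ∫ t in Ioc (0:ℝ) T, ‖u t - v t‖ ^ 2 := by
  intro σ hσ n hn
  obtain ⟨hα0, hα2⟩ := hα
  obtain ⟨hb1, hb2⟩ := hβh
  have h2b1 : (0:ℝ) < 2*βh - 1 := by linarith
  have h22b : (0:ℝ) ≤ 2 - 2*βh := by linarith
  have hγpos : (0:ℝ) < 2*α + 2 - 2*βh := by nlinarith [mul_pos hρh h2b1]
  have hμ0 : (0:ℝ) ≤ (2*βh-1)*ρh := mul_nonneg h2b1.le hρh.le
  have hμγ : (2*βh-1)*ρh ≤ 2*α + 2 - 2*βh := by nlinarith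
  have hK₁0 : (0:ℝ) < max (C n) 0 + 1 := by
    have := le_max_right (C n) 0; linarith
  have hn' : (0:ℝ) ≤ n ^ ((2-2*βh)*ρh) := Real.rpow_nonneg hn.le _
  set K₂ : ℝ := (max (C n) 0 + 1) * (1 + n ^ ((2-2*βh)*ρh)) with hK₂def
  have hK₂pos : 0 < K₂ := mul_pos hK₁0 (by linarith)
  set Chat : ℝ := σ ^ (-(2*βh-2*α)/(2*α+2-2*βh)) * (3*K₂) ^ (2/(2*α+2-2*βh)) with hChatdef
  have hChatpos : 0 < Chat :=
    mul_pos (Real.rpow_pos_of_pos hσ _) (Real.rpow_pos_of_pos (by linarith) _)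
  refine ⟨Chat, hChatpos, ?_⟩
  rintro u v ⟨hucont, huL2⟩ ⟨hvcont, hvL2⟩ hub hvb
  -- the local Lipschitz bound processed through (P1)
  have hD : ∀ t ∈ Icc (0:ℝ) T, ∀ x y : V, ‖ιVH x‖ ≤ n → ‖ιVH y‖ ≤ n →
      N α (Fhat t x - Fhat t y) ≤
        K₂ * (1 + ‖x‖^((2*βh-1)*ρh) + ‖y‖^((2*βh-1)*ρh)) *
          (‖ιVH x - ιVH y‖^(2-2*βh) * ‖x - y‖^(2*βh-1)) := by
    intro t ht x y hx hy
    have hEN : ∀ z : V, ‖ιVH z‖ ≤ n →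
        N βh (ιV z) ^ ρh ≤ n ^ ((2-2*βh)*ρh) * ‖z‖^((2*βh-1)*ρh) := by
      intro z hz
      have h1 : N βh (ιV z) ≤ n ^ (2-2*βh) * ‖z‖^(2*βh-1) :=
        (hP1 z).trans (mul_le_mul_of_nonneg_right
          (Real.rpow_le_rpow (norm_nonneg _) hz h22b)
          (Real.rpow_nonneg (norm_nonneg _) _))
      calc N βh (ιV z) ^ ρh ≤ (n ^ (2-2*βh) * ‖z‖^(2*βh-1)) ^ ρh :=
            Real.rpow_le_rpow (hN_nonneg _ _) h1 hρh.le
        _ = n ^ ((2-2*βh)*ρh) * ‖z‖^((2*βh-1)*ρh) := by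
            rw [Real.mul_rpow (Real.rpow_nonneg hn.le _) (Real.rpow_nonneg (norm_nonneg _) _),
              ← Real.rpow_mul hn.le, ← Real.rpow_mul (norm_nonneg _)]
    have hNw : N βh (ιV (x - y)) ≤ ‖ιVH x - ιVH y‖^(2-2*βh) * ‖x - y‖^(2*βh-1) := by
      have h := hP1 (x - y); rwa [map_sub ιVH x y] at h
    have hAμ0 : (0:ℝ) ≤ ‖x‖^((2*βh-1)*ρh) := Real.rpow_nonneg (norm_nonneg _) _
    have hBμ0 : (0:ℝ) ≤ ‖y‖^((2*βh-1)*ρh) := Real.rpow_nonneg (norm_nonneg _) _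
    have hNx0 : (0:ℝ) ≤ N βh (ιV x) ^ ρh := Real.rpow_nonneg (hN_nonneg _ _) _
    have hNy0 : (0:ℝ) ≤ N βh (ιV y) ^ ρh := Real.rpow_nonneg (hN_nonneg _ _) _
    have hf1 : C n * (1 + N βh (ιV x) ^ ρh + N βh (ιV y) ^ ρh) ≤
        K₂ * (1 + ‖x‖^((2*βh-1)*ρh) + ‖y‖^((2*βh-1)*ρh)) := by
      calc C n * (1 + N βh (ιV x) ^ ρh + N βh (ιV y) ^ ρh)
          ≤ (max (C n) 0 + 1) *
              (1 + n ^ ((2-2*βh)*ρh) * ‖x‖^((2*βh-1)*ρh)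
                 + n ^ ((2-2*βh)*ρh) * ‖y‖^((2*βh-1)*ρh)) := by
            apply mul_le_mul
            · have := le_max_left (C n) 0; linarith
            · linarith [hEN x hx, hEN y hy]
            · linarith
            · linarith
        _ ≤ K₂ * (1 + ‖x‖^((2*βh-1)*ρh) + ‖y‖^((2*βh-1)*ρh)) := by
            rw [hK₂def]
            nlinarith [mul_nonneg hK₁0.le hAμ0, mul_nonneg hK₁0.le hBμ0,
              mul_nonneg hK₁0.le hn']
    calc N α (Fhat t x - Fhat t y)
        ≤ C n * (1 + N βh (ιV x) ^ ρh + N βh (ιV y) ^ ρh) * N βh (ιV (x - y)) :=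
          hlip n hn t ht x y hx hy
      _ ≤ K₂ * (1 + ‖x‖^((2*βh-1)*ρh) + ‖y‖^((2*βh-1)*ρh)) *
            (‖ιVH x - ιVH y‖^(2-2*βh) * ‖x - y‖^(2*βh-1)) := by
          apply mul_le_mul hf1 hNw (hN_nonneg _ _)
          positivity
  -- core estimate
  have hcore : ∀ (g : Vs) (x y : V),
      N α g ≤ K₂ * (1 + ‖x‖^((2*βh-1)*ρh) + ‖y‖^((2*βh-1)*ρh)) *
        (‖ιVH x - ιVH y‖^(2-2*βh) * ‖x - y‖^(2*βh-1)) →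
      pair g (x - y) ≤ Chat * ((1 + ‖x‖^2 + ‖y‖^2) * ‖ιVH x - ιVH y‖^2)
        + σ * ‖x - y‖^2 := by
    intro g x y hg
    have h1 : pair g (x - y) ≤ N α g * ‖ιVH x - ιVH y‖^(2*α) * ‖x - y‖^(1-2*α) := by
      have h := hP2 g (x - y); rwa [map_sub ιVH x y] at h
    have h2 := pointwise_est (μ := (2*βh-1)*ρh) hα0 hα2 hb1 hb2 hγpos hμ0 hμγ hσ hK₂pos
      (norm_nonneg x) (norm_nonneg y) (norm_nonneg (ιVH x - ιVH y)) (norm_nonneg (x - y))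
      (hN_nonneg _ _) hg
    rw [hChatdef]
    exact h1.trans h2
  -- absolute-value pointwise bound
  have habs : ∀ t ∈ Icc (0:ℝ) T, ∀ x y : V, ‖ιVH x‖ ≤ n → ‖ιVH y‖ ≤ n →
      |pair (Fhat t x - Fhat t y) (x - y)| ≤
        Chat * ((1 + ‖x‖^2 + ‖y‖^2) * ‖ιVH x - ιVH y‖^2) + σ * ‖x - y‖^2 := by
    intro t ht x y hx hy
    rw [abs_le]
    constructor
    · have hgs := hD t ht y x hy hx
      have hgs' : N α (Fhat t y - Fhat t x) ≤
          K₂ * (1 + ‖x‖^((2*βh-1)*ρh) + ‖y‖^((2*βh-1)*ρh)) *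
            (‖ιVH x - ιVH y‖^(2-2*βh) * ‖x - y‖^(2*βh-1)) := by
        rw [norm_sub_rev (ιVH y) (ιVH x), norm_sub_rev y x] at hgs
        exact le_of_le_of_eq hgs (by ring)
      have h := hcore (Fhat t y - Fhat t x) x y hgs'
      have e : pair (Fhat t y - Fhat t x) (x - y)
          = -(pair (Fhat t x - Fhat t y) (x - y)) := by
        rw [← neg_sub (Fhat t x) (Fhat t y), map_neg, ContinuousLinearMap.neg_apply]
      rw [e] at h
      linarith
    · exact hcore _ x y (hD t ht x y hx hy)
  -- integrability
  have hu_m : AEStronglyMeasurable u (volume.restrict (Ioc 0 T)) := huL2.aestronglyMeasurable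
  have hv_m : AEStronglyMeasurable v (volume.restrict (Ioc 0 T)) := hvL2.aestronglyMeasurable
  have hsq : ∀ w : ℝ → V, MemLp w 2 (volume.restrict (Ioc 0 T)) →
      Integrable (fun t => ‖w t‖^2) (volume.restrict (Ioc 0 T)) := by
    intro w hw
    have h := hw.integrable_norm_rpow two_ne_zero ENNReal.ofNat_ne_top
    refine h.congr (ae_of_all _ fun t => ?_)
    norm_num [Real.rpow_natCast]
  have hq_int : Integrable (fun t => ‖u t - v t‖^2) (volume.restrict (Ioc 0 T)) := by
    have := hsq (fun t => u t - v t) (huL2.sub hvL2)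
    simpa using this
  have hu2 := hsq u huL2
  have hv2 := hsq v hvL2
  have hone : Integrable (fun _ : ℝ => (1:ℝ)) (volume.restrict (Ioc 0 T)) :=
    integrableOn_const (by simp [Real.volume_Ioc])
  have hdom : Integrable
      (fun t => (1 + ‖u t‖^2 + ‖v t‖^2) * (2*n)^2) (volume.restrict (Ioc 0 T)) :=
    ((hone.add hu2).add hv2).mul_const _
  have m1 : AEStronglyMeasurable (fun t => ‖u t‖^2) (volume.restrict (Ioc 0 T)) :=
    (hu_m.norm.mul hu_m.norm).congr (ae_of_all _ fun t => (pow_two ‖u t‖).symm)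
  have m2 : AEStronglyMeasurable (fun t => ‖v t‖^2) (volume.restrict (Ioc 0 T)) :=
    (hv_m.norm.mul hv_m.norm).congr (ae_of_all _ fun t => (pow_two ‖v t‖).symm)
  have mw : AEStronglyMeasurable (fun t => ‖ιVH (u t) - ιVH (v t)‖)
      (volume.restrict (Ioc 0 T)) :=
    ((ιVH.continuous.comp_aestronglyMeasurable hu_m).sub
      (ιVH.continuous.comp_aestronglyMeasurable hv_m)).norm
  have mw2 : AEStronglyMeasurable (fun t => ‖ιVH (u t) - ιVH (v t)‖^2)
      (volume.restrict (Ioc 0 T)) :=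
    (mw.mul mw).congr (ae_of_all _ fun t => (pow_two _).symm)
  have hp_meas : AEStronglyMeasurable
      (fun t => (1 + ‖u t‖^2 + ‖v t‖^2) * ‖ιVH (u t) - ιVH (v t)‖^2)
      (volume.restrict (Ioc 0 T)) :=
    ((aestronglyMeasurable_const.add m1).add m2).mul mw2
  have hp_int : Integrable
      (fun t => (1 + ‖u t‖^2 + ‖v t‖^2) * ‖ιVH (u t) - ιVH (v t)‖^2)
      (volume.restrict (Ioc 0 T)) := by
    refine hdom.mono' hp_meas ?_
    refine (ae_restrict_iff' measurableSet_Ioc).2 (ae_of_all _ fun t ht => ?_)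
    have ht' := Ioc_subset_Icc_self ht
    have h1 : ‖ιVH (u t) - ιVH (v t)‖ ≤ 2*n := by
      calc ‖ιVH (u t) - ιVH (v t)‖ ≤ ‖ιVH (u t)‖ + ‖ιVH (v t)‖ := norm_sub_le _ _
        _ ≤ 2*n := by linarith [hub t ht', hvb t ht']
    have h2 : ‖ιVH (u t) - ιVH (v t)‖^2 ≤ (2*n)^2 :=
      pow_le_pow_left₀ (norm_nonneg _) h1 2
    rw [Real.norm_eq_abs, abs_of_nonneg (by positivity)]
    exact mul_le_mul_of_nonneg_left h2 (by positivity)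
  -- putting everything together
  set f : ℝ → ℝ := fun t => pair (Fhat t (u t) - Fhat t (v t)) (u t - v t) with hfdef
  have hbound_ae : (fun t => |f t|) ≤ᵐ[volume.restrict (Ioc 0 T)]
      fun t => Chat * ((1 + ‖u t‖^2 + ‖v t‖^2) * ‖ιVH (u t) - ιVH (v t)‖^2)
        + σ * ‖u t - v t‖^2 :=
    (ae_restrict_iff' measurableSet_Ioc).2 (ae_of_all _ fun t ht =>
      habs t (Ioc_subset_Icc_self ht) (u t) (v t)
        (hub t (Ioc_subset_Icc_self ht)) (hvb t (Ioc_subset_Icc_self ht)))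
  have h0 : |∫ t in Ioc (0:ℝ) T, f t| ≤ ∫ t in Ioc (0:ℝ) T, |f t| := by
    simpa [Real.norm_eq_abs] using
      norm_integral_le_integral_norm (μ := volume.restrict (Ioc 0 T)) f
  have h1 : (∫ t in Ioc (0:ℝ) T, |f t|) ≤
      ∫ t in Ioc (0:ℝ) T,
        (Chat * ((1 + ‖u t‖^2 + ‖v t‖^2) * ‖ιVH (u t) - ιVH (v t)‖^2)
          + σ * ‖u t - v t‖^2) :=
    integral_mono_of_nonneg (ae_of_all _ fun t => abs_nonneg _)
      ((hp_int.const_mul Chat).add (hq_int.const_mul σ)) hbound_ae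
  have h2 : (∫ t in Ioc (0:ℝ) T,
        (Chat * ((1 + ‖u t‖^2 + ‖v t‖^2) * ‖ιVH (u t) - ιVH (v t)‖^2)
          + σ * ‖u t - v t‖^2))
      = Chat * (∫ t in Ioc (0:ℝ) T,
          (1 + ‖u t‖^2 + ‖v t‖^2) * ‖ιVH (u t) - ιVH (v t)‖^2)
        + σ * ∫ t in Ioc (0:ℝ) T, ‖u t - v t‖^2 := by
    rw [integral_add (hp_int.const_mul Chat) (hq_int.const_mul σ),
      integral_const_mul, integral_const_mul]
  calc |∫ t in Ioc (0:ℝ) T, f t| ≤ ∫ t in Ioc (0:ℝ) T, |f t| := h0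
    _ ≤ _ := h1
    _ = _ := h2
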